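/- Let k be a field with separable closure k̄ and Γ = Gal(k̄/k). Let X, Y be smooth geometrically integral k-varieties with k̄[X]^× = k̄^× = k̄[Y]^×. If the pullback Γ-morphism ψ : Pic(X̄) ⊕ Pic(Ȳ) → Pic(X̄ ×_{k̄} Ȳ) is an isomorphism, then the elementary obstruction e(X ×_k Y) ∈ Ext²_Γ(Pic(X̄ ×_{k̄} Ȳ), k̄^×) vanishes if and only if both e(X) and e(Y) vanish. -/

import Mathlib

section TwoExtPrelude

variable (G : Type) [Group G]

/-- A Yoneda 2-extension `0 → N → B₁ → B₂ → C → 0` of `G`-modules. -/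
structure TwoExt (N C : Type) [AddCommGroup N] [DistribMulAction G N]
    [AddCommGroup C] [DistribMulAction G C] where
  B₁ : Type
  B₂ : Type
  [ab₁ : AddCommGroup B₁]
  [act₁ : DistribMulAction G B₁]
  [ab₂ : AddCommGroup B₂]
  [act₂ : DistribMulAction G B₂]
  ι : N →+ B₁
  d : B₁ →+ B₂
  p : B₂ →+ C
  equiv_ι : ∀ (g : G) (x : N), ι (g • x) = g • ι x
  equiv_d : ∀ (g : G) (x : B₁), d (g • x) = g • d x
  equiv_p : ∀ (g : G) (x : B₂), p (g • x) = g • p x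
  inj : Function.Injective ι
  surj : Function.Surjective p
  ex₁ : Function.Exact ι d
  ex₂ : Function.Exact d p

attribute [instance] TwoExt.ab₁ TwoExt.act₁ TwoExt.ab₂ TwoExt.act₂

variable {G}
variable {N C : Type} [AddCommGroup N] [DistribMulAction G N]
  [AddCommGroup C] [DistribMulAction G C]

/-- A morphism of 2-extensions inducing the identity on `N` and on `C`. -/
structure TwoExtHom (E F : TwoExt G N C) where
  f₁ : E.B₁ →+ F.B₁
  f₂ : E.B₂ →+ F.B₂
  equiv₁ : ∀ (g : G) (x : E.B₁), f₁ (g • x) = g • f₁ x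
  equiv₂ : ∀ (g : G) (x : E.B₂), f₂ (g • x) = g • f₂ x
  comm_ι : ∀ n : N, f₁ (E.ι n) = F.ι n
  comm_d : ∀ x : E.B₁, f₂ (E.d x) = F.d (f₁ x)
  comm_p : ∀ y : E.B₂, F.p (f₂ y) = E.p y

/-- The elementary relation generating Yoneda equivalence of 2-extensions. -/
def TwoExtRel (E F : TwoExt G N C) : Prop := Nonempty (TwoExtHom E F)

/-- Yoneda equivalence of 2-extensions: the equivalence relation generated by the
existence of a morphism of 2-extensions fixing the ends. -/
def YEquiv (E F : TwoExt G N C) : Prop := Relation.EqvGen TwoExtRel E F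

variable (G N C)

/-- `Ext²_G(C, N)` as the set of Yoneda equivalence classes of 2-extensions. -/
def Ext2 : Type 1 :=
  Quotient (Relation.EqvGen.setoid (@TwoExtRel G _ N C _ _ _ _))

/-- The trivial 2-extension `0 → N → N → C → C → 0` (with zero middle map),
representing the zero class of `Ext²_G(C, N)`. -/
def TwoExt.triv : TwoExt G N C where
  B₁ := N
  B₂ := C
  ι := AddMonoidHom.id N
  d := 0
  p := AddMonoidHom.id C
  equiv_ι := fun _ _ => rfl
  equiv_d := fun g x => by simp
  equiv_p := fun _ _ => rfl
  inj := fun _ _ h => h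
  surj := fun c => ⟨c, rfl⟩
  ex₁ := fun y => by simp
  ex₂ := fun y => by
    constructor
    · rintro rfl; exact ⟨0, rfl⟩
    · rintro ⟨x, rfl⟩; rfl

variable {G N C}

/-- The class of a 2-extension `E` in `Ext²` is zero. -/
def TwoExt.IsZeroClass (E : TwoExt G N C) : Prop := YEquiv E (TwoExt.triv G N C)

/-- Restriction of a 2-extension of `G`-modules to a subgroup `H ≤ G`. -/
def TwoExt.res (H : Subgroup G) (E : TwoExt G N C) : TwoExt (H : Subgroup G) N C where
  B₁ := E.B₁
  B₂ := E.B₂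
  ι := E.ι
  d := E.d
  p := E.p
  equiv_ι := fun h x => E.equiv_ι (h : G) x
  equiv_d := fun h x => E.equiv_d (h : G) x
  equiv_p := fun h x => E.equiv_p (h : G) x
  inj := E.inj
  surj := E.surj
  ex₁ := E.ex₁
  ex₂ := E.ex₂

section Pullback

variable {M : Type} [AddCommGroup M] [DistribMulAction G M]

/-- The middle fibre product `B₂ ×_C M` used to pull a 2-extension back along `f : M → C`. -/
def pbCarrier (E : TwoExt G N C) (f : M →+ C) : AddSubgroup (E.B₂ × M) where
  carrier := {x | E.p x.1 = f x.2}
  add_mem' := by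
    intro a b ha hb
    simp only [Set.mem_setOf_eq, Prod.fst_add, Prod.snd_add, map_add] at *
    rw [ha, hb]
  zero_mem' := by simp
  neg_mem' := by
    intro a ha
    simp only [Set.mem_setOf_eq, Prod.fst_neg, Prod.snd_neg, map_neg] at *
    rw [ha]

/-- The `G`-action on the fibre product `B₂ ×_C M`. -/
def pbAction (E : TwoExt G N C) (f : M →+ C) (hf : ∀ (g : G) (m : M), f (g • m) = g • f m) :
    DistribMulAction G ↥(pbCarrier E f) where
  smul g x := ⟨g • (x : E.B₂ × M), by
    have hx : E.p (x : E.B₂ × M).1 = f (x : E.B₂ × M).2 := x.2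
    show E.p (g • (x : E.B₂ × M)).1 = f (g • (x : E.B₂ × M)).2
    rw [Prod.smul_fst, Prod.smul_snd, E.equiv_p, hf, hx]⟩
  one_smul x := by apply Subtype.ext; exact one_smul G _
  mul_smul a b x := by apply Subtype.ext; exact mul_smul a b _
  smul_zero g := by apply Subtype.ext; exact smul_zero g
  smul_add g x y := by apply Subtype.ext; exact smul_add g (x : E.B₂ × M) (y : E.B₂ × M)

/-- Pullback of a 2-extension along a `G`-morphism `f : M → C`. -/
def TwoExt.pullback (E : TwoExt G N C) (f : M →+ C)
    (hf : ∀ (g : G) (m : M), f (g • m) = g • f m) : TwoExt G N M :=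
  letI := pbAction E f hf
  {
  B₁ := E.B₁
  B₂ := ↥(pbCarrier E f)
  act₂ := pbAction E f hf
  ι := E.ι
  d := { toFun := fun x => ⟨(E.d x, 0), by
          show E.p (E.d x) = f 0
          rw [map_zero]
          exact (E.ex₂ (E.d x)).mpr ⟨x, rfl⟩⟩
         map_zero' := by apply Subtype.ext; simp
         map_add' := fun x y => by apply Subtype.ext; simp }
  p := (AddMonoidHom.snd E.B₂ M).comp (pbCarrier E f).subtype
  equiv_ι := E.equiv_ι
  equiv_d := by
    intro g x
    apply Subtype.ext
    show (E.d (g • x), (0 : M)) = g • (E.d x, (0 : M))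
    rw [E.equiv_d, Prod.smul_mk, smul_zero]
  equiv_p := by
    intro g x
    show ((g • x : ↥(pbCarrier E f)) : E.B₂ × M).2 = g • (x : E.B₂ × M).2
    rfl
  inj := E.inj
  surj := by
    intro m
    obtain ⟨b, hb⟩ := E.surj (f m)
    exact ⟨⟨(b, m), hb⟩, rfl⟩
  ex₁ := by
    intro y
    constructor
    · intro hy
      have : E.d y = 0 := congrArg Prod.fst (congrArg Subtype.val hy)
      exact (E.ex₁ y).mp this
    · rintro ⟨n, rfl⟩
      apply Subtype.ext
      have : E.d (E.ι n) = 0 := (E.ex₁ (E.ι n)).mpr ⟨n, rfl⟩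
      show (E.d (E.ι n), (0:M)) = (0 : E.B₂ × M)
      rw [this]; rfl
  ex₂ := by
    intro y
    constructor
    · intro hy
      have h2 : (y : E.B₂ × M).2 = 0 := hy
      have h1 : E.p (y : E.B₂ × M).1 = 0 := by
        have hmem : E.p (y : E.B₂ × M).1 = f (y : E.B₂ × M).2 := y.2
        rw [h2, map_zero] at hmem
        exact hmem
      obtain ⟨x, hx⟩ := (E.ex₂ _).mp h1
      refine ⟨x, ?_⟩
      apply Subtype.ext
      show (E.d x, (0:M)) = (y : E.B₂ × M)
      rw [hx, ← h2]
    · rintro ⟨x, rfl⟩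
      rfl
  }

end Pullback

end TwoExtPrelude

/-!
The maps `πF`, `πD`, `ψ` form a morphism to `EXY` from the sum `EX ⊕ EY` pushed out along the
addition `K × K → K`. A morphism of 2-extensions that is the identity on `K` and `f` on the right
end makes its source Yoneda equivalent to the pullback of its target along `f`. Hence
`e(X ×_k Y) = 0` forces the sum to vanish, and pulling back along the two inclusions gives
`e(X) = e(Y) = 0`. Conversely, when `ψ` is invertible the target is reached from the pullback of
the sum along `ψ⁻¹`, and a sum of trivial extensions is trivial.
-/

section YonedaEquivalence

variable {G : Type} [Group G] {N : Type} [AddCommGroup N] [DistribMulAction G N]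

theorem YEquiv.map {C C' : Type} [AddCommGroup C] [DistribMulAction G C]
    [AddCommGroup C'] [DistribMulAction G C']
    (Φ : TwoExt G N C → TwoExt G N C') (hΦ : ∀ E F, TwoExtHom E F → TwoExtHom (Φ E) (Φ F))
    {E F : TwoExt G N C} (h : YEquiv E F) : YEquiv (Φ E) (Φ F) := by
  induction h with
  | rel E F hEF => exact .rel _ _ (hEF.map (hΦ E F))
  | refl E => exact .refl _
  | symm E F _ ih => exact .symm _ _ ih
  | trans E F H _ _ ih₁ ih₂ => exact .trans _ _ _ ih₁ ih₂

variable {C M : Type} [AddCommGroup C] [DistribMulAction G C]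
  [AddCommGroup M] [DistribMulAction G M]

theorem TwoExtHom.isZeroClass_iff {E F : TwoExt G N C} (h : TwoExtHom E F) :
    E.IsZeroClass ↔ F.IsZeroClass :=
  ⟨.trans _ _ _ (.symm _ _ (.rel _ _ ⟨h⟩)), .trans _ _ _ (.rel _ _ ⟨h⟩)⟩

def TwoExtHom.pullback {E F : TwoExt G N C} (h : TwoExtHom E F) (f : M →+ C)
    (hf : ∀ (g : G) (m : M), f (g • m) = g • f m) :
    TwoExtHom (E.pullback f hf) (F.pullback f hf) where
  f₁ := h.f₁
  f₂ := ((h.f₂.prodMap (AddMonoidHom.id M)).comp (pbCarrier E f).subtype).codRestrict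
    (pbCarrier F f) fun x => (h.comm_p x.1.1).trans x.2
  equiv₁ := h.equiv₁
  equiv₂ g x := Subtype.ext <| Prod.ext (h.equiv₂ g x.1.1) rfl
  comm_ι := h.comm_ι
  comm_d x := Subtype.ext <| Prod.ext (h.comm_d x) rfl
  comm_p _ := rfl

def TwoExtHom.pullbackTriv (f : M →+ C) (hf : ∀ (g : G) (m : M), f (g • m) = g • f m) :
    TwoExtHom ((TwoExt.triv G N C).pullback f hf) (TwoExt.triv G N M) where
  f₁ := AddMonoidHom.id N
  f₂ := (AddMonoidHom.snd C M).comp (pbCarrier (TwoExt.triv G N C) f).subtype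
  equiv₁ _ _ := rfl
  equiv₂ _ _ := rfl
  comm_ι _ := rfl
  comm_d _ := rfl
  comm_p _ := rfl

theorem TwoExt.IsZeroClass.pullback {E : TwoExt G N C} (hE : E.IsZeroClass) (f : M →+ C)
    (hf : ∀ (g : G) (m : M), f (g • m) = g • f m) : (E.pullback f hf).IsZeroClass :=
  .trans _ _ _ (YEquiv.map (fun E => E.pullback f hf) (fun _ _ h => h.pullback f hf) hE)
    (.rel _ _ ⟨TwoExtHom.pullbackTriv f hf⟩)

structure TwoExtHomOver (E : TwoExt G N M) (F : TwoExt G N C) (f : M →+ C) where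
  f₁ : E.B₁ →+ F.B₁
  f₂ : E.B₂ →+ F.B₂
  equiv₁ : ∀ (g : G) (x : E.B₁), f₁ (g • x) = g • f₁ x
  equiv₂ : ∀ (g : G) (x : E.B₂), f₂ (g • x) = g • f₂ x
  comm_ι : ∀ n : N, f₁ (E.ι n) = F.ι n
  comm_d : ∀ x : E.B₁, f₂ (E.d x) = F.d (f₁ x)
  comm_p : ∀ y : E.B₂, F.p (f₂ y) = f (E.p y)

namespace TwoExtHomOver

variable {E : TwoExt G N M} {F : TwoExt G N C} {f : M →+ C}

def toPullback (h : TwoExtHomOver E F f) (hf : ∀ (g : G) (m : M), f (g • m) = g • f m) :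
    TwoExtHom E (F.pullback f hf) where
  f₁ := h.f₁
  f₂ := (h.f₂.prod E.p).codRestrict (pbCarrier F f) h.comm_p
  equiv₁ := h.equiv₁
  equiv₂ g y := Subtype.ext <| Prod.ext (h.equiv₂ g y) (E.equiv_p g y)
  comm_ι := h.comm_ι
  comm_d x := Subtype.ext <| Prod.ext (h.comm_d x) ((E.ex₂ _).mpr ⟨x, rfl⟩)
  comm_p _ := rfl

theorem isZeroClass_of_target (h : TwoExtHomOver E F f)
    (hf : ∀ (g : G) (m : M), f (g • m) = g • f m) (hF : F.IsZeroClass) : E.IsZeroClass :=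
  (h.toPullback hf).isZeroClass_iff.mpr (hF.pullback f hf)

noncomputable def ofPullbackInv (h : TwoExtHomOver E F f) (hbij : Function.Bijective f)
    (hf : ∀ (g : G) (c : C), (AddEquiv.ofBijective f hbij).symm (g • c)
      = g • (AddEquiv.ofBijective f hbij).symm c) :
    TwoExtHom (E.pullback (AddEquiv.ofBijective f hbij).symm.toAddMonoidHom hf) F where
  f₁ := h.f₁
  f₂ := h.f₂.comp ((AddMonoidHom.fst E.B₂ C).comp (pbCarrier E _).subtype)
  equiv₁ := h.equiv₁
  equiv₂ g y := h.equiv₂ g y.1.1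
  comm_ι := h.comm_ι
  comm_d := h.comm_d
  comm_p y := by
    show F.p (h.f₂ y.1.1) = y.1.2
    rw [h.comm_p, y.2]
    exact (AddEquiv.ofBijective f hbij).apply_symm_apply y.1.2

theorem target_isZeroClass_of_bijective (h : TwoExtHomOver E F f) (hbij : Function.Bijective f)
    (hf : ∀ (g : G) (m : M), f (g • m) = g • f m) (hE : E.IsZeroClass) : F.IsZeroClass := by
  set e := AddEquiv.ofBijective f hbij
  have he : ∀ (g : G) (c : C), e.symm (g • c) = g • e.symm c := fun g c =>
    e.injective <| by
      rw [e.apply_symm_apply]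
      change g • c = f (g • e.symm c)
      rw [hf]
      exact congrArg (g • ·) (e.apply_symm_apply c).symm
  exact (h.ofPullbackInv hbij he).isZeroClass_iff.mp (hE.pullback _ he)

end TwoExtHomOver

end YonedaEquivalence

abbrev QuotientAddGroup.distribMulAction {G A : Type} [Group G] [AddCommGroup A]
    [DistribMulAction G A] (W : AddSubgroup A) (hW : ∀ (g : G), ∀ a ∈ W, g • a ∈ W) :
    DistribMulAction G (A ⧸ W) :=
  letI : SMul G (A ⧸ W) :=
    ⟨fun g => QuotientAddGroup.map W W (DistribSMul.toAddMonoidHom A g) (hW g)⟩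
  (QuotientAddGroup.mk'_surjective W).distribMulAction (QuotientAddGroup.mk' W) fun _ _ => rfl

theorem Function.Exact.prodMap {A B C A' B' C' : Type} [Zero C] [Zero C']
    {f : A → B} {g : B → C} {f' : A' → B'} {g' : B' → C'}
    (h : Function.Exact f g) (h' : Function.Exact f' g') :
    Function.Exact (Prod.map f f') (Prod.map g g') := fun y => by
  rw [Set.range_prodMap, Set.mem_prod, ← h y.1, ← h' y.2, Prod.map_apply, Prod.mk_eq_zero]

section Sum

variable {G : Type} [Group G] {N : Type} [AddCommGroup N] [DistribMulAction G N]
  {C C' : Type} [AddCommGroup C] [DistribMulAction G C] [AddCommGroup C'] [DistribMulAction G C']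

namespace TwoExt

def sumRel (E : TwoExt G N C) (F : TwoExt G N C') : AddSubgroup (E.B₁ × F.B₁) :=
  (E.ι.prod (-F.ι)).range

theorem smul_mem_sumRel (E : TwoExt G N C) (F : TwoExt G N C') :
    ∀ (g : G), ∀ x ∈ E.sumRel F, g • x ∈ E.sumRel F := by
  rintro g _ ⟨n, rfl⟩
  exact ⟨g • n, Prod.ext (E.equiv_ι g n) (by simp [F.equiv_ι])⟩

/-- The direct sum of `E` and `F` pushed out along the addition `N × N → N`. -/
def sum (E : TwoExt G N C) (F : TwoExt G N C') : TwoExt G N (C × C') :=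
  letI := QuotientAddGroup.distribMulAction (E.sumRel F) (E.smul_mem_sumRel F)
  { B₁ := (E.B₁ × F.B₁) ⧸ E.sumRel F
    B₂ := E.B₂ × F.B₂
    act₁ := QuotientAddGroup.distribMulAction (E.sumRel F) (E.smul_mem_sumRel F)
    ι := (QuotientAddGroup.mk' _).comp ((AddMonoidHom.inl _ _).comp E.ι)
    d := QuotientAddGroup.lift _ (E.d.prodMap F.d) <| by
      rintro _ ⟨n, rfl⟩
      exact Prod.ext ((E.ex₁ _).mpr ⟨n, rfl⟩) (by simp [(F.ex₁ _).mpr ⟨n, rfl⟩])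
    p := E.p.prodMap F.p
    equiv_ι g n := congrArg QuotientAddGroup.mk (Prod.ext (E.equiv_ι g n) (smul_zero g).symm)
    equiv_d g x := QuotientAddGroup.induction_on x fun x =>
      Prod.ext (E.equiv_d g x.1) (F.equiv_d g x.2)
    equiv_p g y := Prod.ext (E.equiv_p g y.1) (F.equiv_p g y.2)
    inj := (injective_iff_map_eq_zero _).mpr fun a ha => by
      obtain ⟨n, hn⟩ := (QuotientAddGroup.eq_zero_iff _).mp ha
      obtain ⟨hn₁, hn₂⟩ := Prod.ext_iff.mp hn
      obtain rfl : n = 0 := F.inj (by simpa using hn₂)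
      exact E.inj (by simpa using hn₁.symm)
    surj := E.surj.prodMap F.surj
    ex₁ y := QuotientAddGroup.induction_on y fun ⟨x, x'⟩ => by
      constructor
      · intro hy
        obtain ⟨a, rfl⟩ := (E.ex₁ x).mp (congrArg Prod.fst hy)
        obtain ⟨b, rfl⟩ := (F.ex₁ x').mp (congrArg Prod.snd hy)
        -- `(ι a, ι b) - (ι (a + b), 0) = (-ι b, ι b)` is the relation at `-b`
        refine ⟨a + b, QuotientAddGroup.eq.mpr ⟨-b, ?_⟩⟩
        simp
      · rintro ⟨n, hn⟩
        rw [← hn]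
        exact Prod.ext ((E.ex₁ _).mpr ⟨n, rfl⟩) (map_zero F.d)
    ex₂ y := (E.ex₂.prodMap F.ex₂ y).trans
      ⟨fun ⟨x, hx⟩ => ⟨QuotientAddGroup.mk x, hx⟩, fun ⟨q, hq⟩ => by
        obtain ⟨x, rfl⟩ := QuotientAddGroup.mk_surjective q
        exact ⟨x, hq⟩⟩ }

end TwoExt

namespace TwoExtHom

def refl (E : TwoExt G N C) : TwoExtHom E E where
  f₁ := AddMonoidHom.id _
  f₂ := AddMonoidHom.id _
  equiv₁ _ _ := rfl
  equiv₂ _ _ := rfl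
  comm_ι _ := rfl
  comm_d _ := rfl
  comm_p _ := rfl

def sum {E E' : TwoExt G N C} {F F' : TwoExt G N C'} (h : TwoExtHom E E')
    (k : TwoExtHom F F') : TwoExtHom (E.sum F) (E'.sum F') where
  f₁ := QuotientAddGroup.map _ _ (h.f₁.prodMap k.f₁) <| by
    rintro _ ⟨n, rfl⟩
    exact ⟨n, Prod.ext (h.comm_ι n).symm (by simp [k.comm_ι])⟩
  f₂ := h.f₂.prodMap k.f₂
  equiv₁ g x := QuotientAddGroup.induction_on x fun x =>
    congrArg QuotientAddGroup.mk (Prod.ext (h.equiv₁ g x.1) (k.equiv₁ g x.2))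
  equiv₂ g y := Prod.ext (h.equiv₂ g y.1) (k.equiv₂ g y.2)
  comm_ι n := congrArg QuotientAddGroup.mk (Prod.ext (h.comm_ι n) (map_zero k.f₁))
  comm_d x := QuotientAddGroup.induction_on x fun x =>
    Prod.ext (h.comm_d x.1) (k.comm_d x.2)
  comm_p y := Prod.ext (h.comm_p y.1) (k.comm_p y.2)

def trivSum : TwoExtHom (TwoExt.triv G N (C × C')) ((TwoExt.triv G N C).sum (TwoExt.triv G N C'))
    where
  f₁ := ((TwoExt.triv G N C).sum (TwoExt.triv G N C')).ι
  f₂ := AddMonoidHom.id _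
  equiv₁ := ((TwoExt.triv G N C).sum (TwoExt.triv G N C')).equiv_ι
  equiv₂ _ _ := rfl
  comm_ι _ := rfl
  comm_d _ := rfl
  comm_p _ := rfl

end TwoExtHom

theorem TwoExt.IsZeroClass.sum {E : TwoExt G N C} {F : TwoExt G N C'} (hE : E.IsZeroClass)
    (hF : F.IsZeroClass) : (E.sum F).IsZeroClass :=
  have hEF : YEquiv (E.sum F) ((TwoExt.triv G N C).sum F) :=
    YEquiv.map (·.sum F) (fun _ _ h => h.sum (.refl F)) hE
  have hF' : YEquiv ((TwoExt.triv G N C).sum F) ((TwoExt.triv G N C).sum (TwoExt.triv G N C')) :=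
    YEquiv.map (TwoExt.sum _) (fun _ _ k => (TwoExtHom.refl _).sum k) hF
  .trans _ _ _ hEF <| .trans _ _ _ hF' (TwoExtHom.trivSum.isZeroClass_iff.mp (.refl _))

namespace TwoExtHomOver

def sumInl (E : TwoExt G N C) (F : TwoExt G N C') :
    TwoExtHomOver E (E.sum F) (AddMonoidHom.inl C C') where
  f₁ := (QuotientAddGroup.mk' _).comp (AddMonoidHom.inl _ _)
  f₂ := AddMonoidHom.inl _ _
  equiv₁ g _ := congrArg QuotientAddGroup.mk (Prod.ext rfl (smul_zero g).symm)
  equiv₂ g _ := Prod.ext rfl (smul_zero g).symm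
  comm_ι _ := rfl
  comm_d _ := Prod.ext rfl (map_zero F.d).symm
  comm_p _ := Prod.ext rfl (map_zero F.p)

def sumInr (E : TwoExt G N C) (F : TwoExt G N C') :
    TwoExtHomOver F (E.sum F) (AddMonoidHom.inr C C') where
  f₁ := (QuotientAddGroup.mk' _).comp (AddMonoidHom.inr _ _)
  f₂ := AddMonoidHom.inr _ _
  equiv₁ g _ := congrArg QuotientAddGroup.mk (Prod.ext (smul_zero g).symm rfl)
  equiv₂ g _ := Prod.ext (smul_zero g).symm rfl
  comm_ι n := QuotientAddGroup.eq.mpr ⟨n, by simp⟩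
  comm_d _ := Prod.ext (map_zero E.d).symm rfl
  comm_p _ := Prod.ext (map_zero E.p) rfl

variable {C'' : Type} [AddCommGroup C''] [DistribMulAction G C'']

def sumLift {E : TwoExt G N C} {F : TwoExt G N C'} {H : TwoExt G N C''}
    (φ₁ : E.B₁ × F.B₁ →+ H.B₁) (φ₂ : E.B₂ × F.B₂ →+ H.B₂) (f : C × C' →+ C'')
    (hφ₁ : ∀ (g : G) (v : E.B₁ × F.B₁), φ₁ (g • v) = g • φ₁ v)
    (hφ₂ : ∀ (g : G) (v : E.B₂ × F.B₂), φ₂ (g • v) = g • φ₂ v)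
    (hι : ∀ a b : N, H.ι (a + b) = φ₁ (E.ι a, F.ι b))
    (hd : ∀ (x : E.B₁) (y : F.B₁), H.d (φ₁ (x, y)) = φ₂ (E.d x, F.d y))
    (hp : ∀ (u : E.B₂) (v : F.B₂), H.p (φ₂ (u, v)) = f (E.p u, F.p v)) :
    TwoExtHomOver (E.sum F) H f where
  f₁ := QuotientAddGroup.lift _ φ₁ <| by
    rintro _ ⟨n, rfl⟩
    show φ₁ (E.ι n, -F.ι n) = 0
    rw [← map_neg, ← hι, add_neg_cancel, map_zero]
  f₂ := φ₂
  equiv₁ g x := QuotientAddGroup.induction_on x (hφ₁ g)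
  equiv₂ := hφ₂
  comm_ι n := by
    show φ₁ (E.ι n, 0) = H.ι n
    rw [← map_zero F.ι, ← hι, add_zero]
  comm_d x := QuotientAddGroup.induction_on x fun x => (hd x.1 x.2).symm
  comm_p y := hp y.1 y.2

end TwoExtHomOver

theorem TwoExt.IsZeroClass.of_sum_left {E : TwoExt G N C} {F : TwoExt G N C'}
    (h : (E.sum F).IsZeroClass) : E.IsZeroClass :=
  (TwoExtHomOver.sumInl E F).isZeroClass_of_target
    (fun g _ => Prod.ext rfl (smul_zero g).symm) h

theorem TwoExt.IsZeroClass.of_sum_right {E : TwoExt G N C} {F : TwoExt G N C'}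
    (h : (E.sum F).IsZeroClass) : F.IsZeroClass :=
  (TwoExtHomOver.sumInr E F).isZeroClass_of_target
    (fun g _ => Prod.ext (smul_zero g).symm rfl) h

end Sum

/-- `K = k̄^×`; `EX`, `EY`, `EXY` are the 2-extensions `1 → k̄^× → k̄(Z)^× → Div(Z̄) → Pic(Z̄) → 1`
for `Z = X, Y, X × Y`; `πF`, `πD`, `ψ` are the multiplication and pullback maps on functions,
divisors and Picard groups, which with the addition `K × K → K` form a morphism `EX ⊕ EY → EXY`. -/
theorem elementary_obstruction_of_product_of_iso
    (Γ : Type) [Group Γ]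
    (K PX PY PXY : Type) [AddCommGroup K] [DistribMulAction Γ K]
    [AddCommGroup PX] [DistribMulAction Γ PX]
    [AddCommGroup PY] [DistribMulAction Γ PY]
    [AddCommGroup PXY] [DistribMulAction Γ PXY]
    (EX : TwoExt Γ K PX) (EY : TwoExt Γ K PY) (EXY : TwoExt Γ K PXY)
    (πF : EX.B₁ × EY.B₁ →+ EXY.B₁) (πD : EX.B₂ × EY.B₂ →+ EXY.B₂)
    (ψ : PX × PY →+ PXY)
    (hπF : ∀ (g : Γ) (v : EX.B₁ × EY.B₁), πF (g • v) = g • πF v)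
    (hπD : ∀ (g : Γ) (v : EX.B₂ × EY.B₂), πD (g • v) = g • πD v)
    (hψ : ∀ (g : Γ) (v : PX × PY), ψ (g • v) = g • ψ v)
    (hsq₁ : ∀ a b : K, EXY.ι (a + b) = πF (EX.ι a, EY.ι b))
    (hsq₂ : ∀ (x : EX.B₁) (y : EY.B₁), EXY.d (πF (x, y)) = πD (EX.d x, EY.d y))
    (hsq₃ : ∀ (u : EX.B₂) (v : EY.B₂), EXY.p (πD (u, v)) = ψ (EX.p u, EY.p v))
    (hbij : Function.Bijective ψ) :
    EXY.IsZeroClass ↔ (EX.IsZeroClass ∧ EY.IsZeroClass) := by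
  let π := TwoExtHomOver.sumLift πF πD ψ hπF hπD hsq₁ hsq₂ hsq₃
  constructor
  · intro hXY
    have hsum := π.isZeroClass_of_target hψ hXY
    exact ⟨hsum.of_sum_left, hsum.of_sum_right⟩
  · rintro ⟨hX, hY⟩
    exact π.target_isZeroClass_of_bijective hbij hψ (hX.sum hY)
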